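/- Let μ be a probability measure on a measurable space, h ≥ 0 a measurable function with ∫ h dμ = 1, ν = h·μ, and a > e. Then ν(h > a) ≤ H(ν,μ) / (log a − 1). -/

import Mathlib

open MeasureTheory ENNReal
open scoped Classical

noncomputable section

/-- Relative entropy (Kullback-Leibler information) `H(ν,μ)`:
`∫ log (dν/dμ) dν` if `ν ≪ μ` (and the integral exists), `+∞` otherwise. -/
def relEnt {Ω : Type*} [MeasurableSpace Ω] (ν μ : Measure Ω) : ℝ≥0∞ :=
  if ν ≪ μ ∧ Integrable (fun x => Real.log ((ν.rnDeriv μ) x).toReal) ν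
  then ENNReal.ofReal (∫ x, Real.log ((ν.rnDeriv μ) x).toReal ∂ν)
  else ∞

/-- The measure `ν = h·μ`. -/
def densMeas {Ω : Type*} [MeasurableSpace Ω] (μ : Measure Ω) (h : Ω → ℝ) : Measure Ω :=
  μ.withDensity fun x => ENNReal.ofReal (h x)

/-- The truncated measure `ν_a = (1/ν(h ≤ a)) · h · 1_{h ≤ a} · μ` for `ν = h·μ`. -/
def truncMeas {Ω : Type*} [MeasurableSpace Ω] (μ : Measure Ω) (h : Ω → ℝ) (a : ℝ) : Measure Ω :=
  ((densMeas μ h) {x | h x ≤ a})⁻¹ • (densMeas μ h).restrict {x | h x ≤ a}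

/-! When `μ` and `ν = h·μ` are probability measures, `H(ν,μ)` is Mathlib's Kullback–Leibler
divergence, which equals `∫⁻ φ(h) dμ` with `φ(x) = x log x + 1 - x ≥ 0`. On `{h > a}` one has
`φ(h) ≥ h (log a - 1)`, so that integral dominates `(log a - 1) · ν(h > a)`. -/

open InformationTheory

section

variable {Ω : Type*} [MeasurableSpace Ω]

lemma relEnt_eq_klDiv {ν μ : Measure Ω}
    (h_univ : ν Set.univ = μ Set.univ) : relEnt ν μ = klDiv ν μ := by
  rw [relEnt, klDiv_def]
  refine if_congr Iff.rfl ?_ rfl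
  rw [measureReal_def, measureReal_def, h_univ, add_sub_cancel_right]
  rfl

lemma klDiv_withDensity_eq_lintegral_klFun {μ : Measure Ω}
    [IsFiniteMeasure μ] {f : Ω → ℝ≥0∞} [IsFiniteMeasure (μ.withDensity f)] (hf : Measurable f) :
    klDiv (μ.withDensity f) μ = ∫⁻ x, ENNReal.ofReal (klFun (f x).toReal) ∂μ := by
  rw [klDiv_eq_lintegral_klFun_of_ac (withDensity_absolutelyContinuous μ f)]
  refine lintegral_congr_ae ?_
  filter_upwards [Measure.rnDeriv_withDensity μ hf] with x hx
  rw [hx]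

lemma mul_log_sub_one_le_klFun {a x : ℝ} (ha : 0 < a) (hax : a ≤ x) :
    x * (Real.log a - 1) ≤ klFun x := by
  have hlog : Real.log a ≤ Real.log x := Real.log_le_log ha hax
  have hx : 0 ≤ x := ha.le.trans hax
  rw [klFun_apply]
  nlinarith [mul_le_mul_of_nonneg_left hlog hx]

lemma ofReal_log_sub_one_mul_densMeas_le_klDiv {μ : Measure Ω}
    [IsFiniteMeasure μ] {h : Ω → ℝ} [IsFiniteMeasure (densMeas μ h)] (hh : Measurable h)
    {a : ℝ} (ha : 0 < a) :
    ENNReal.ofReal (Real.log a - 1) * densMeas μ h {x | a < h x} ≤ klDiv (densMeas μ h) μ := by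
  have hA : MeasurableSet {x | a < h x} := measurableSet_lt measurable_const hh
  have : IsFiniteMeasure (μ.withDensity fun x => ENNReal.ofReal (h x)) := ‹_›
  rw [densMeas, klDiv_withDensity_eq_lintegral_klFun hh.ennreal_ofReal, withDensity_apply _ hA,
    ← lintegral_const_mul' _ _ ofReal_ne_top]
  calc ∫⁻ x in {x | a < h x}, ENNReal.ofReal (Real.log a - 1) * ENNReal.ofReal (h x) ∂μ
      ≤ ∫⁻ x in {x | a < h x}, ENNReal.ofReal (klFun (ENNReal.ofReal (h x)).toReal) ∂μ := by
        refine setLIntegral_mono (by fun_prop) fun x (hx : a < h x) => ?_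
        rw [← ENNReal.ofReal_mul' (ha.trans hx).le, ENNReal.toReal_ofReal (ha.trans hx).le,
          mul_comm]
        exact ENNReal.ofReal_le_ofReal (mul_log_sub_one_le_klFun ha hx.le)
    _ ≤ ∫⁻ x, ENNReal.ofReal (klFun (ENNReal.ofReal (h x)).toReal) ∂μ :=
        setLIntegral_le_lintegral _ _

end

theorem tail_measure_le_entropy_general
    {Ω : Type*} [MeasurableSpace Ω] (μ : Measure Ω) (hprob : IsProbabilityMeasure μ)
    (h : Ω → ℝ) (hmeas : Measurable h)
    (hint : IsProbabilityMeasure (densMeas μ h))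
    (a : ℝ) (ha : a > Real.exp 1) :
    densMeas μ h {x | a < h x} ≤
      relEnt (densMeas μ h) μ / ENNReal.ofReal (Real.log a - 1) := by
  have ha_pos : 0 < a := (Real.exp_pos 1).trans ha
  have hlog : 0 < Real.log a - 1 := by
    rw [sub_pos, Real.lt_log_iff_exp_lt ha_pos]
    exact ha
  rw [relEnt_eq_klDiv (by simp),
    ENNReal.le_div_iff_mul_le (Or.inl (ENNReal.ofReal_pos.2 hlog).ne') (Or.inl ofReal_ne_top),
    mul_comm]
  exact ofReal_log_sub_one_mul_densMeas_le_klDiv hmeas ha_pos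

/-- **Lemma 3.3 (2).** For `ν = h·μ` and `a > e`, `ν(h > a) ≤ H(ν,μ)/(log a - 1)`. -/
theorem tail_measure_le_entropy
    {Ω : Type*} [MeasurableSpace Ω] (μ : Measure Ω) (hprob : IsProbabilityMeasure μ)
    (h : Ω → ℝ) (hmeas : Measurable h) (hpos : ∀ x, 0 ≤ h x)
    (hint : IsProbabilityMeasure (densMeas μ h))
    (a : ℝ) (ha : a > Real.exp 1) :
    densMeas μ h {x | a < h x} ≤
      relEnt (densMeas μ h) μ / ENNReal.ofReal (Real.log a - 1) :=
  tail_measure_le_entropy_general μ hprob h hmeas hint a ha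

end
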